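/- arXiv:1103.3930 — 3 statements merged into one kernel-verified Lean document; each statement's English description precedes it below -/
import Mathlib

section
/- Let b₀, b₁, b₂ be integers and set a₀ = b₀, a₁ = b₁ − 2b₀, a₂ = b₂ − 2b₁ + 3b₀. Then in ℚ⟦t⟧, with c^{(2)}_t = (1 − t)^{−b₂} (1 − 2t)^{b₁} (1 − 3t)^{−b₀} and c_i^{(2)} its t^i-coefficient, one has 2·([c₁^{(2)}]² − c₂^{(2)}) = a₂² − 2a₀ + 2a₁ − a₂. In particular the Schur polynomial [c₁^{(2)}]² − c₂^{(2)} is nonnegative if and only if a₂² − 2a₀ + 2a₁ − a₂ ≥ 0. -/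
/-!
Writing `log (f / f₀) = λ₁ t + (λ₂ / 2) t² + ⋯`, the pair `(λ₁, λ₂)` depends only on the first
three coefficients of `f` and is additive under multiplication. For `1 − kt` it is `(−k, −k²)`,
so for `c = (1 − t)^{−b₂} (1 − 2t)^{b₁} (1 − 3t)^{−b₀}` it is `(a₂, b₂ − 4b₁ + 9b₀)`, and
`2 (c₁² − c₂) = λ₁² − λ₂` when `c₀ = 1`.
-/

open PowerSeries

namespace PowerSeries

theorem coeff_two_mul {R : Type*} [CommRing R] (f g : R⟦X⟧) :
    coeff 2 (f * g) =
      constantCoeff f * coeff 2 g + coeff 1 f * coeff 1 g + coeff 2 f * constantCoeff g := by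
  simp [coeff_mul, Finset.Nat.antidiagonal_succ, coeff_zero_eq_constantCoeff_apply]
  ring

variable {K : Type*} [Field K]

/-- The coefficients of `t` and of `2 t²` in `log (f / f₀)`. -/
noncomputable def logJet (f : K⟦X⟧) : K × K :=
  (coeff 1 f / constantCoeff f, 2 * coeff 2 f / constantCoeff f - (coeff 1 f / constantCoeff f) ^ 2)

theorem logJet_mul {f g : K⟦X⟧} (hf : constantCoeff f ≠ 0) (hg : constantCoeff g ≠ 0) :
    logJet (f * g) = logJet f + logJet g := by
  simp only [logJet, coeff_one_mul, coeff_two_mul, map_mul, Prod.mk_add_mk, Prod.mk.injEq]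
  constructor
  · field_simp
  · field_simp; ring

noncomputable def logJetHom : K⟦X⟧ˣ →* Multiplicative (K × K) where
  toFun u := .ofAdd (logJet (u : K⟦X⟧))
  map_one' := by simp [logJet]
  map_mul' u v := by
    rw [Units.val_mul, logJet_mul (u.isUnit.map constantCoeff).ne_zero
      (v.isUnit.map constantCoeff).ne_zero, ofAdd_add]

theorem logJet_val_mul (u v : K⟦X⟧ˣ) :
    logJet ((u * v : K⟦X⟧ˣ) : K⟦X⟧) = logJet (u : K⟦X⟧) + logJet (v : K⟦X⟧) :=
  congrArg Multiplicative.toAdd (map_mul logJetHom u v)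

theorem logJet_val_zpow (u : K⟦X⟧ˣ) (n : ℤ) :
    logJet ((u ^ n : K⟦X⟧ˣ) : K⟦X⟧) = n • logJet (u : K⟦X⟧) :=
  (congrArg Multiplicative.toAdd (map_zpow logJetHom u n)).trans (toAdd_zpow _ n)

theorem logJet_one_sub_C_mul_X (k : K) : logJet (1 - C k * X) = (-k, -k ^ 2) := by
  simp [logJet, coeff_one]

theorem two_mul_sq_coeff_one_sub_coeff_two {f : K⟦X⟧} (hf : constantCoeff f = 1) :
    2 * (coeff 1 f ^ 2 - coeff 2 f) = (logJet f).1 ^ 2 - (logJet f).2 := by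
  simp only [logJet, hf, div_one]
  ring

end PowerSeries

theorem stmt8 (b0 b1 b2 a0 a1 a2 : ℤ)
    (ha0 : a0 = b0) (ha1 : a1 = b1 - 2 * b0) (ha2 : a2 = b2 - 2 * b1 + 3 * b0)
    (u : ℕ → (PowerSeries ℚ)ˣ)
    (hu : ∀ k, (u k : PowerSeries ℚ) = 1 - PowerSeries.C (k : ℚ) * PowerSeries.X)
    (c : PowerSeries ℚ)
    (hc : c = ((u 1 ^ (-b2) * u 2 ^ b1 * u 3 ^ (-b0) : (PowerSeries ℚ)ˣ) : PowerSeries ℚ)) :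
    2 * ((PowerSeries.coeff 1) c ^ 2 - (PowerSeries.coeff 2) c) =
      ((a2 ^ 2 - 2 * a0 + 2 * a1 - a2 : ℤ) : ℚ) ∧
    (0 ≤ (PowerSeries.coeff 1) c ^ 2 - (PowerSeries.coeff 2) c ↔
      0 ≤ a2 ^ 2 - 2 * a0 + 2 * a1 - a2) := by
  have hu_jet (k : ℕ) : logJet (u k : ℚ⟦X⟧) = (-(k : ℚ), -(k : ℚ) ^ 2) := by
    rw [hu, logJet_one_sub_C_mul_X]
  have hc_jet : logJet c = ((a2 : ℚ), (b2 - 4 * b1 + 9 * b0 : ℚ)) := by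
    simp only [hc, logJet_val_mul, logJet_val_zpow, hu_jet, ha2]
    simp only [Prod.smul_mk, Prod.mk_add_mk, Prod.mk.injEq, zsmul_eq_mul]
    push_cast
    constructor <;> ring
  have hc0 : constantCoeff c = 1 := by
    rw [hc]
    change ((Units.map _ (u 1 ^ (-b2) * u 2 ^ b1 * u 3 ^ (-b0)) : ℚˣ) : ℚ) = 1
    simp [hu]
  have key : 2 * (coeff 1 c ^ 2 - coeff 2 c) = ((a2 ^ 2 - 2 * a0 + 2 * a1 - a2 : ℤ) : ℚ) := by
    rw [two_mul_sq_coeff_one_sub_coeff_two hc0, hc_jet, ha0, ha1, ha2]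
    push_cast
    ring
  refine ⟨key, ?_⟩
  rw [← Int.cast_nonneg_iff (R := ℚ), ← key, mul_nonneg_iff_of_pos_left two_pos]
end

section
/- Let b₀, b₁, b₂, b₃ be integers and set a₀ = b₀, a₁ = b₁ − 2b₀, a₂ = b₂ − 2b₁ + 3b₀, a₃ = b₃ − 2b₂ + 3b₁ − 4b₀. With c^{(3)}_t = (1 − t)^{−b₃} (1 − 2t)^{b₂} (1 − 3t)^{−b₁} (1 − 4t)^{b₀} in ℚ⟦t⟧ and c_i^{(3)} its t^i-coefficient, one has 3·(c₁^{(3)} c₂^{(3)} − c₃^{(3)}) = a₃³ + 18a₀ − 12a₁ + 6a₂ − a₃. In particular the Schur polynomial c₁^{(3)} c₂^{(3)} − c₃^{(3)} is nonnegative if and only if a₃³ + 18a₀ − 12a₁ + 6a₂ − a₃ ≥ 0. -/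
/-!
For `n : ℤ`, the map `n ↦ binomialSeries n` turns addition into multiplication and sends `1` to
`1 + X`, so `(1 + a X) ^ n` is the rescaled binomial series `∑ choose n j • a ^ j X ^ j`.
The first three coefficients of `c` are therefore explicit polynomials in the `b`'s, and the
identity becomes a polynomial identity.
-/

lemma Ring.intCast_choose_eq_eval_descPochhammer_div {K : Type*} [Field K] [CharZero K] (n : ℤ)
    (j : ℕ) : ((Ring.choose n j : ℤ) : K) = (descPochhammer K j).eval (n : K) / j.factorial := by
  rw [eq_div_iff (Nat.cast_ne_zero.mpr j.factorial_ne_zero), ← Int.cast_natCast, ← Int.cast_mul,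
    mul_comm, ← nsmul_eq_mul, ← Ring.descPochhammer_eq_factorial_smul_choose,
    ← Polynomial.eval_eq_smeval, descPochhammer_eval_cast]

namespace PowerSeries

variable {A : Type*} [CommRing A]

lemma rescale_binomialSeries_intCast_one (a : A) :
    rescale a (binomialSeries A (1 : ℤ)) = 1 + C a * X := by
  simpa [rescale_X] using congrArg (rescale a) (binomialSeries_nat (R := ℤ) (A := A) 1)

lemma val_zpow_eq_rescale_binomialSeries {u : A⟦X⟧ˣ} {a : A} (hu : (u : A⟦X⟧) = 1 + C a * X)
    (n : ℤ) : ((u ^ n : A⟦X⟧ˣ) : A⟦X⟧) = rescale a (binomialSeries A n) := by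
  have hstep (m : ℤ) : rescale a (binomialSeries A (m + 1)) =
      rescale a (binomialSeries A m) * u := by
    rw [binomialSeries_add, map_mul, rescale_binomialSeries_intCast_one, hu]
  induction n using Int.induction_on with
  | zero => simp
  | succ m ih => rw [zpow_add_one, Units.val_mul, ih, ← Int.cast_natCast, hstep]
  | pred m ih =>
    rw [← Units.mul_left_inj u, ← Units.val_mul, ← zpow_add_one, sub_add_cancel, ih, ← hstep,
      sub_add_cancel]

lemma coeff_zpow_of_val_eq_one_add_C_mul_X {u : A⟦X⟧ˣ} {a : A} (hu : (u : A⟦X⟧) = 1 + C a * X)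
    (n : ℤ) (j : ℕ) : coeff j ((u ^ n : A⟦X⟧ˣ) : A⟦X⟧) = a ^ j * Ring.choose n j := by
  simp [val_zpow_eq_rescale_binomialSeries hu, coeff_rescale]

end PowerSeries

open PowerSeries

theorem stmt10 (b0 b1 b2 b3 a0 a1 a2 a3 : ℤ)
    (ha0 : a0 = b0) (ha1 : a1 = b1 - 2 * b0) (ha2 : a2 = b2 - 2 * b1 + 3 * b0)
    (ha3 : a3 = b3 - 2 * b2 + 3 * b1 - 4 * b0)
    (u : ℕ → (PowerSeries ℚ)ˣ)
    (hu : ∀ k, (u k : PowerSeries ℚ) = 1 - PowerSeries.C (k : ℚ) * PowerSeries.X)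
    (c : PowerSeries ℚ)
    (hc : c = ((u 1 ^ (-b3) * u 2 ^ b2 * u 3 ^ (-b1) * u 4 ^ b0 :
      (PowerSeries ℚ)ˣ) : PowerSeries ℚ)) :
    3 * ((PowerSeries.coeff 1) c * (PowerSeries.coeff 2) c - (PowerSeries.coeff 3) c) =
      ((a3 ^ 3 + 18 * a0 - 12 * a1 + 6 * a2 - a3 : ℤ) : ℚ) ∧
    (0 ≤ (PowerSeries.coeff 1) c * (PowerSeries.coeff 2) c - (PowerSeries.coeff 3) c ↔
      0 ≤ a3 ^ 3 + 18 * a0 - 12 * a1 + 6 * a2 - a3) := by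
  have hu' (k : ℕ) : (u k : ℚ⟦X⟧) = 1 + C (-(k : ℚ)) * X := by
    rw [hu, map_neg, neg_mul, sub_eq_add_neg]
  have identity : 3 * (coeff 1 c * coeff 2 c - coeff 3 c) =
      ((a3 ^ 3 + 18 * a0 - 12 * a1 + 6 * a2 - a3 : ℤ) : ℚ) := by
    simp only [hc, Units.val_mul, coeff_mul, Finset.Nat.sum_antidiagonal_succ,
      Finset.Nat.antidiagonal_zero, Finset.sum_singleton,
      coeff_zpow_of_val_eq_one_add_C_mul_X (hu' _), Ring.intCast_choose_eq_eval_descPochhammer_div,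
      descPochhammer_succ_right, descPochhammer_zero, Polynomial.eval_mul, Polynomial.eval_sub,
      Polynomial.eval_X, Polynomial.eval_one, Polynomial.eval_natCast, Nat.factorial]
    subst ha0 ha1 ha2 ha3
    push_cast
    ring
  refine ⟨identity, ?_⟩
  rw [← Int.cast_nonneg_iff (R := ℚ), ← identity]
  exact (mul_nonneg_iff_of_pos_left three_pos).symm
end

section
/- Let b₀, b₁, b₂, b₃ be integers and set a₀ = b₀, a₁ = b₁ − 2b₀, a₂ = b₂ − 2b₁ + 3b₀, a₃ = b₃ − 2b₂ + 3b₁ − 4b₀. With c^{(3)}_t = (1 − t)^{−b₃} (1 − 2t)^{b₂} (1 − 3t)^{−b₁} (1 − 4t)^{b₀} in ℚ⟦t⟧ and c_i^{(3)} its t^i-coefficient, one has 6·([c₁^{(3)}]³ − 2 c₁^{(3)} c₂^{(3)} + c₃^{(3)}) = a₃³ + 6(a₀a₃ − a₁a₃ + a₂a₃) − 3a₃² − 36a₀ + 24a₁ − 12a₂ + 2a₃. -/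
/-!
A unit `1 - k t` raised to an integer power `n` is the binomial series `(1 + t) ^ n` rescaled by
`t ↦ -k t`, so its `t^i`-coefficient is `(-k)^i · choose n i`. Multiplying out the four factors up
to order `t³` writes `c₁, c₂, c₃` as polynomials in `b₀, …, b₃`, and the identity becomes a
polynomial identity in the `bᵢ`.
-/

namespace PowerSeries

section Semiring

variable {R : Type*} [Semiring R] (φ ψ : R⟦X⟧)

theorem coeff_two_mul_s11 : coeff 2 (φ * ψ) =
    constantCoeff φ * coeff 2 ψ + coeff 1 φ * coeff 1 ψ + coeff 2 φ * constantCoeff ψ := by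
  simp [coeff_mul, Finset.Nat.antidiagonal_succ, add_assoc]

theorem coeff_three_mul : coeff 3 (φ * ψ) = constantCoeff φ * coeff 3 ψ +
    coeff 1 φ * coeff 2 ψ + coeff 2 φ * coeff 1 ψ + coeff 3 φ * constantCoeff ψ := by
  simp [coeff_mul, Finset.Nat.antidiagonal_succ, add_assoc]

end Semiring

section Field

variable {K : Type*} [Field K] [CharZero K]

theorem rescale_neg_binomialSeries_one (k : K) :
    rescale (-k) (binomialSeries K (1 : K)) = 1 - C k * X := by
  rw [← Nat.cast_one, binomialSeries_nat, pow_one, map_add, map_one, rescale_X, map_neg, neg_mul,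
    sub_eq_add_neg]

theorem val_zpow_eq_rescale_binomialSeries_s11 {v : K⟦X⟧ˣ} {k : K} (hv : (v : K⟦X⟧) = 1 - C k * X)
    (n : ℤ) : ((v ^ n : K⟦X⟧ˣ) : K⟦X⟧) = rescale (-k) (binomialSeries K (n : K)) := by
  induction n using Int.induction_on with
  | zero => simp
  | succ n ih =>
    rw [zpow_add_one, Units.val_mul, ih, hv, ← rescale_neg_binomialSeries_one, ← map_mul,
      ← binomialSeries_add]
    push_cast; rfl
  | pred n ih =>
    have h : rescale (-k) (binomialSeries K ((-n : ℤ) : K)) =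
        rescale (-k) (binomialSeries K ((-n - 1 : ℤ) : K)) * v := by
      rw [hv, ← rescale_neg_binomialSeries_one, ← map_mul, ← binomialSeries_add]
      push_cast; ring_nf
    rw [zpow_sub_one, Units.val_mul, ih, h, mul_assoc, Units.mul_inv, mul_one]

theorem coeff_val_zpow {v : K⟦X⟧ˣ} {k : K} (hv : (v : K⟦X⟧) = 1 - C k * X) (n : ℤ) (i : ℕ) :
    coeff i ((v ^ n : K⟦X⟧ˣ) : K⟦X⟧) = (-k) ^ i * Ring.choose (n : K) i := by
  simp [val_zpow_eq_rescale_binomialSeries_s11 hv, coeff_rescale]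

theorem constantCoeff_val_zpow {v : K⟦X⟧ˣ} {k : K} (hv : (v : K⟦X⟧) = 1 - C k * X) (n : ℤ) :
    constantCoeff ((v ^ n : K⟦X⟧ˣ) : K⟦X⟧) = 1 := by
  simpa using coeff_val_zpow hv n 0

end Field

end PowerSeries

namespace Ring

variable {K : Type*} [Field K] [CharZero K]

theorem choose_two_eq (r : K) : choose r 2 = r * (r - 1) / 2 := by
  simp [choose_eq_smul, descPochhammer_succ_right, ← Polynomial.aeval_eq_smeval, Nat.factorial]
  ring

theorem choose_three_eq (r : K) : choose r 3 = r * (r - 1) * (r - 2) / 6 := by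
  simp [choose_eq_smul, descPochhammer_succ_right, ← Polynomial.aeval_eq_smeval, Nat.factorial,
    map_ofNat]
  ring

end Ring

theorem stmt11 (b0 b1 b2 b3 a0 a1 a2 a3 : ℤ)
    (ha0 : a0 = b0) (ha1 : a1 = b1 - 2 * b0) (ha2 : a2 = b2 - 2 * b1 + 3 * b0)
    (ha3 : a3 = b3 - 2 * b2 + 3 * b1 - 4 * b0)
    (u : ℕ → (PowerSeries ℚ)ˣ)
    (hu : ∀ k, (u k : PowerSeries ℚ) = 1 - PowerSeries.C (k : ℚ) * PowerSeries.X)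
    (c : PowerSeries ℚ)
    (hc : c = ((u 1 ^ (-b3) * u 2 ^ b2 * u 3 ^ (-b1) * u 4 ^ b0 :
      (PowerSeries ℚ)ˣ) : PowerSeries ℚ)) :
    6 * ((PowerSeries.coeff 1) c ^ 3 -
        2 * (PowerSeries.coeff 1) c * (PowerSeries.coeff 2) c +
        (PowerSeries.coeff 3) c) =
      ((a3 ^ 3 + 6 * (a0 * a3 - a1 * a3 + a2 * a3) - 3 * a3 ^ 2
          - 36 * a0 + 24 * a1 - 12 * a2 + 2 * a3 : ℤ) : ℚ) := by
  subst hc ha0 ha1 ha2 ha3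
  simp only [Units.val_mul, map_mul, PowerSeries.coeff_one_mul, PowerSeries.coeff_two_mul_s11,
    PowerSeries.coeff_three_mul, PowerSeries.constantCoeff_val_zpow (hu _),
    PowerSeries.coeff_val_zpow (hu _), Ring.choose_one_right,
    Ring.choose_two_eq, Ring.choose_three_eq]
  push_cast
  ring
end
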